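/- Let G be a finite group with subgroups G₁, G₂, G₃, G₄ that violate the Ingleton inequality, i.e., |G₁|·|G₂|·|G₃₄|·|G₁₂₃|·|G₁₂₄| < |G₁₂|·|G₁₃|·|G₁₄|·|G₂₃|·|G₂₄|. Then no three of the four subgroups are independent and the four subgroups are not independent; that is, for all distinct i, j, k ∈ {1,2,3,4} one has |G_i|·|G_j|·|G_k| ≠ |G|²·|G_i ∩ G_j ∩ G_k|, and |G₁|·|G₂|·|G₃|·|G₄| ≠ |G|³·|G₁ ∩ G₂ ∩ G₃ ∩ G₄|. -/

import Mathlib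

/-!
With `h(α) = log (|G| / |G_α|)`, the Ingleton inequality reads
`I(1;2) ≤ I(1;2|3) + I(1;2|4) + I(3;4)`, and every conditional mutual information is
nonnegative because `|X| |Y| ≤ |Z| |X ∩ Y|` whenever `X, Y ≤ Z`. So Ingleton holds as soon
as `G₁` and `G₂` are independent, in particular when `{1,2,3}` or `{1,2,4}` is independent.
Four other instances of the same subgroup inequality show that Ingleton also holds when `G₂` is
independent of `G₃ ∩ G₄`, which covers `{2,3,4}`, and `{1,3,4}` by the symmetry `1 ↔ 2`.
Finally, independence of all four subgroups forces independence of `{1,2,3}`, because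
`|G₁| |G₂| |G₃| ≤ |G|² |G₁₂₃|` and `|G₁₂₃| |G₄| ≤ |G| |G₁₂₃₄|`.
-/

theorem forall_ne_of_forall_lt_of_swap {α : Type*} [LinearOrder α] {P : α → α → α → Prop}
    (swap_left : ∀ i j k, P i j k → P j i k) (swap_right : ∀ i j k, P i j k → P i k j)
    (h : ∀ i j k, i < j → j < k → P i j k) (i j k : α) (hij : i ≠ j) (hik : i ≠ k)
    (hjk : j ≠ k) : P i j k := by
  rcases hij.lt_or_gt with hij | hij <;> rcases hik.lt_or_gt with hik | hik <;>
    rcases hjk.lt_or_gt with hjk | hjk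
  · exact h i j k hij hjk
  · exact swap_right _ _ _ (h i k j hik hjk)
  · exact absurd (hik.trans hij) hjk.asymm
  · exact swap_right _ _ _ (swap_left _ _ _ (h k i j hik hij))
  · exact swap_left _ _ _ (h j i k hij hik)
  · exact absurd (hij.trans hik) hjk.asymm
  · exact swap_left _ _ _ (swap_right _ _ _ (h j k i hjk hik))
  · exact swap_left _ _ _ (swap_right _ _ _ (swap_left _ _ _ (h k j i hjk hij)))

namespace Subgroup

variable {G : Type*} [Group G]

theorem card_mul_relIndex_of_le {K C : Subgroup G} (hK : K ≤ C) :
    Nat.card K * K.relIndex C = Nat.card C := by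
  rw [← relIndex_bot_left, ← relIndex_bot_left C]
  exact relIndex_mul_relIndex ⊥ K C bot_le hK

theorem card_mul_card_le_card_mul_card_inf_of_le {A B C : Subgroup G} [Finite C] (hA : A ≤ C)
    (hB : B ≤ C) : Nat.card A * Nat.card B ≤ Nat.card C * Nat.card ↥(A ⊓ B) := by
  have hA' := card_mul_relIndex_of_le hA
  have hB' := card_mul_relIndex_of_le hB
  have hpos : 0 < A.relIndex C * B.relIndex C := by
    have hC : Nat.card C ≠ 0 := Nat.card_pos.ne'
    exact Nat.pos_of_ne_zero <|
      mul_ne_zero (right_ne_zero_of_mul (hA' ▸ hC)) (right_ne_zero_of_mul (hB' ▸ hC))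
  refine Nat.le_of_mul_le_mul_right ?_ hpos
  calc Nat.card A * Nat.card B * (A.relIndex C * B.relIndex C)
      = (Nat.card A * A.relIndex C) * (Nat.card B * B.relIndex C) := by ring
    _ = Nat.card C * (Nat.card ↥(A ⊓ B) * (A ⊓ B).relIndex C) := by
        rw [hA', hB', card_mul_relIndex_of_le (inf_le_left.trans hA)]
    _ ≤ Nat.card C * (Nat.card ↥(A ⊓ B) * (A.relIndex C * B.relIndex C)) := by
        gcongr; exact relIndex_inf_le
    _ = Nat.card C * Nat.card ↥(A ⊓ B) * (A.relIndex C * B.relIndex C) := by ring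

def IndepPair (A B : Subgroup G) : Prop :=
  Nat.card A * Nat.card B = Nat.card G * Nat.card ↥(A ⊓ B)

def IndepTriple (A B C : Subgroup G) : Prop :=
  Nat.card A * Nat.card B * Nat.card C = Nat.card G ^ 2 * Nat.card ↥(A ⊓ B ⊓ C)

def SatisfiesIngleton (A B C D : Subgroup G) : Prop :=
  Nat.card ↥(A ⊓ B) * Nat.card ↥(A ⊓ C) * Nat.card ↥(A ⊓ D) * Nat.card ↥(B ⊓ C) *
      Nat.card ↥(B ⊓ D) ≤
    Nat.card A * Nat.card B * Nat.card ↥(C ⊓ D) * Nat.card ↥(A ⊓ B ⊓ C) *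
      Nat.card ↥(A ⊓ B ⊓ D)

variable {A B C D : Subgroup G}

theorem IndepPair.symm (h : IndepPair A B) : IndepPair B A := by
  rw [IndepPair, inf_comm, ← h, mul_comm]

theorem indepTriple_comm : IndepTriple A B C ↔ IndepTriple B A C := by
  rw [IndepTriple, IndepTriple, inf_comm B A, mul_comm (Nat.card B)]

theorem indepTriple_right_comm : IndepTriple A B C ↔ IndepTriple A C B := by
  rw [IndepTriple, IndepTriple, inf_right_comm A C B, mul_right_comm _ (Nat.card C)]

theorem SatisfiesIngleton.swap_left (h : SatisfiesIngleton A B C D) :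
    SatisfiesIngleton B A C D := by
  unfold SatisfiesIngleton at h ⊢
  rw [inf_comm B A]
  convert h using 1 <;> ring

variable [Finite G]

theorem card_mul_card_le_card_mul_card_inf (A B : Subgroup G) :
    Nat.card A * Nat.card B ≤ Nat.card G * Nat.card ↥(A ⊓ B) := by
  simpa only [card_top] using card_mul_card_le_card_mul_card_inf_of_le (le_top : A ≤ ⊤) le_top

theorem card_inf_mul_card_inf_le (A B C : Subgroup G) :
    Nat.card ↥(A ⊓ B) * Nat.card ↥(A ⊓ C) ≤ Nat.card A * Nat.card ↥(A ⊓ B ⊓ C) := by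
  rw [inf_assoc, inf_inf_distrib_left]
  exact card_mul_card_le_card_mul_card_inf_of_le inf_le_left inf_le_left

theorem card_mul_card_mul_card_le (A B C : Subgroup G) :
    Nat.card A * Nat.card B * Nat.card C ≤ Nat.card G ^ 2 * Nat.card ↥(A ⊓ B ⊓ C) :=
  calc Nat.card A * Nat.card B * Nat.card C
      ≤ Nat.card G * Nat.card ↥(A ⊓ B) * Nat.card C :=
        Nat.mul_le_mul_right _ (card_mul_card_le_card_mul_card_inf A B)
    _ = Nat.card G * (Nat.card ↥(A ⊓ B) * Nat.card C) := mul_assoc ..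
    _ ≤ Nat.card G * (Nat.card G * Nat.card ↥(A ⊓ B ⊓ C)) :=
        Nat.mul_le_mul_left _ (card_mul_card_le_card_mul_card_inf _ C)
    _ = Nat.card G ^ 2 * Nat.card ↥(A ⊓ B ⊓ C) := by ring

theorem indepTriple_iff : IndepTriple A B C ↔ IndepPair A B ∧ IndepPair (A ⊓ B) C := by
  constructor
  · intro h
    have hle : Nat.card A * Nat.card B * Nat.card C ≤
        Nat.card G * Nat.card ↥(A ⊓ B) * Nat.card C :=
      Nat.mul_le_mul_right _ (card_mul_card_le_card_mul_card_inf A B)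
    have hge : Nat.card G * Nat.card ↥(A ⊓ B) * Nat.card C ≤
        Nat.card G * (Nat.card G * Nat.card ↥(A ⊓ B ⊓ C)) := by
      rw [mul_assoc]; exact Nat.mul_le_mul_left _ (card_mul_card_le_card_mul_card_inf _ C)
    rw [IndepTriple, sq, mul_assoc (Nat.card G)] at h
    have heq := le_antisymm hle (hge.trans_eq h.symm)
    exact ⟨Nat.eq_of_mul_eq_mul_right Nat.card_pos heq,
      Nat.eq_of_mul_eq_mul_left Nat.card_pos ((mul_assoc ..).symm.trans (heq.symm.trans h))⟩
  · rintro ⟨h₁, h₂⟩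
    rw [IndepTriple, h₁, mul_assoc, h₂]; ring

theorem IndepTriple.indepPair (h : IndepTriple A B C) : IndepPair A B :=
  (indepTriple_iff.1 h).1

theorem IndepTriple.indepPair_inf (h : IndepTriple A B C) : IndepPair A (B ⊓ C) :=
  (indepTriple_iff.1 (indepTriple_right_comm.1 (indepTriple_comm.1 h))).2.symm

theorem SatisfiesIngleton.of_indepPair (D : Subgroup G) (hAB : IndepPair A B) :
    SatisfiesIngleton A B C D := by
  rw [IndepPair] at hAB
  have hC := card_inf_mul_card_inf_le C A B
  rw [inf_comm C A, inf_comm C B, inf_right_comm A C B] at hC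
  have hD := card_inf_mul_card_inf_le D A B
  rw [inf_comm D A, inf_comm D B, inf_right_comm A D B] at hD
  have hCD := card_mul_card_le_card_mul_card_inf C D
  refine Nat.le_of_mul_le_mul_left ?_ (Nat.mul_pos Nat.card_pos Nat.card_pos :
    0 < Nat.card C * Nat.card D)
  calc Nat.card C * Nat.card D * (Nat.card ↥(A ⊓ B) * Nat.card ↥(A ⊓ C) *
        Nat.card ↥(A ⊓ D) * Nat.card ↥(B ⊓ C) * Nat.card ↥(B ⊓ D))
      = Nat.card ↥(A ⊓ B) * (Nat.card ↥(A ⊓ C) * Nat.card ↥(B ⊓ C)) *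
          (Nat.card ↥(A ⊓ D) * Nat.card ↥(B ⊓ D)) * (Nat.card C * Nat.card D) := by ring
    _ ≤ Nat.card ↥(A ⊓ B) * (Nat.card C * Nat.card ↥(A ⊓ B ⊓ C)) *
          (Nat.card D * Nat.card ↥(A ⊓ B ⊓ D)) * (Nat.card G * Nat.card ↥(C ⊓ D)) :=
        Nat.mul_le_mul (Nat.mul_le_mul (Nat.mul_le_mul_left _ hC) hD) hCD
    _ = Nat.card C * Nat.card D * (Nat.card G * Nat.card ↥(A ⊓ B) * Nat.card ↥(C ⊓ D) *
          Nat.card ↥(A ⊓ B ⊓ C) * Nat.card ↥(A ⊓ B ⊓ D)) := by ring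
    _ = Nat.card C * Nat.card D * (Nat.card A * Nat.card B * Nat.card ↥(C ⊓ D) *
          Nat.card ↥(A ⊓ B ⊓ C) * Nat.card ↥(A ⊓ B ⊓ D)) := by rw [← hAB]

theorem SatisfiesIngleton.of_indepPair_inf (A : Subgroup G) (h : IndepPair B (C ⊓ D)) :
    SatisfiesIngleton A B C D := by
  have hB := card_inf_mul_card_inf_le B C D
  have hAC := card_inf_mul_card_inf_le A B C
  have hAD := card_inf_mul_card_inf_le A B D
  have hAB := card_mul_card_le_card_mul_card_inf A B
  rw [IndepPair, ← inf_assoc] at h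
  refine Nat.le_of_mul_le_mul_left ?_ (Nat.mul_pos Nat.card_pos Nat.card_pos :
    0 < Nat.card G * Nat.card ↥(A ⊓ B))
  calc Nat.card G * Nat.card ↥(A ⊓ B) * (Nat.card ↥(A ⊓ B) * Nat.card ↥(A ⊓ C) *
        Nat.card ↥(A ⊓ D) * Nat.card ↥(B ⊓ C) * Nat.card ↥(B ⊓ D))
      = Nat.card G * Nat.card ↥(A ⊓ B) ^ 2 * Nat.card ↥(A ⊓ C) * Nat.card ↥(A ⊓ D) *
          (Nat.card ↥(B ⊓ C) * Nat.card ↥(B ⊓ D)) := by ring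
    _ ≤ Nat.card G * Nat.card ↥(A ⊓ B) ^ 2 * Nat.card ↥(A ⊓ C) * Nat.card ↥(A ⊓ D) *
          (Nat.card B * Nat.card ↥(B ⊓ C ⊓ D)) := Nat.mul_le_mul_left _ hB
    _ = Nat.card B * (Nat.card ↥(A ⊓ B) * Nat.card ↥(A ⊓ C)) *
          (Nat.card ↥(A ⊓ B) * Nat.card ↥(A ⊓ D)) * (Nat.card B * Nat.card ↥(C ⊓ D)) :=
        by rw [h]; ring
    _ ≤ Nat.card B * (Nat.card A * Nat.card ↥(A ⊓ B ⊓ C)) *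
          (Nat.card A * Nat.card ↥(A ⊓ B ⊓ D)) * (Nat.card B * Nat.card ↥(C ⊓ D)) :=
        Nat.mul_le_mul_right _ (Nat.mul_le_mul (Nat.mul_le_mul_left _ hAC) hAD)
    _ = Nat.card A * Nat.card B * (Nat.card A * Nat.card B * Nat.card ↥(C ⊓ D) *
          Nat.card ↥(A ⊓ B ⊓ C) * Nat.card ↥(A ⊓ B ⊓ D)) := by ring
    _ ≤ Nat.card G * Nat.card ↥(A ⊓ B) * (Nat.card A * Nat.card B * Nat.card ↥(C ⊓ D) *
          Nat.card ↥(A ⊓ B ⊓ C) * Nat.card ↥(A ⊓ B ⊓ D)) := Nat.mul_le_mul_right _ hAB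

theorem IndepTriple.of_card_mul_card_mul_card_mul_card_eq
    (h : Nat.card A * Nat.card B * Nat.card C * Nat.card D =
      Nat.card G ^ 3 * Nat.card ↥(A ⊓ B ⊓ C ⊓ D)) : IndepTriple A B C := by
  have hle : Nat.card A * Nat.card B * Nat.card C * Nat.card D ≤
      Nat.card G ^ 2 * Nat.card ↥(A ⊓ B ⊓ C) * Nat.card D :=
    Nat.mul_le_mul_right _ (card_mul_card_mul_card_le A B C)
  have hge : Nat.card G ^ 2 * Nat.card ↥(A ⊓ B ⊓ C) * Nat.card D ≤
      Nat.card G ^ 3 * Nat.card ↥(A ⊓ B ⊓ C ⊓ D) :=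
    calc Nat.card G ^ 2 * Nat.card ↥(A ⊓ B ⊓ C) * Nat.card D
        = Nat.card G ^ 2 * (Nat.card ↥(A ⊓ B ⊓ C) * Nat.card D) := mul_assoc ..
      _ ≤ Nat.card G ^ 2 * (Nat.card G * Nat.card ↥(A ⊓ B ⊓ C ⊓ D)) :=
        Nat.mul_le_mul_left _ (card_mul_card_le_card_mul_card_inf _ D)
      _ = Nat.card G ^ 3 * Nat.card ↥(A ⊓ B ⊓ C ⊓ D) := by ring
  exact Nat.eq_of_mul_eq_mul_right Nat.card_pos (le_antisymm hle (hge.trans_eq h.symm))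

end Subgroup

/-- If four subgroups violate the Ingleton inequality, then no three of them are
independent, and the four of them are not independent. -/
theorem stmt13 (G : Type*) [Group G] [Finite G] (H : Fin 4 → Subgroup G)
    (hviol : Nat.card (H 0) * Nat.card (H 1) * Nat.card (H 2 ⊓ H 3 : Subgroup G) *
        Nat.card (H 0 ⊓ H 1 ⊓ H 2 : Subgroup G) * Nat.card (H 0 ⊓ H 1 ⊓ H 3 : Subgroup G) <
      Nat.card (H 0 ⊓ H 1 : Subgroup G) * Nat.card (H 0 ⊓ H 2 : Subgroup G) *
        Nat.card (H 0 ⊓ H 3 : Subgroup G) * Nat.card (H 1 ⊓ H 2 : Subgroup G) *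
        Nat.card (H 1 ⊓ H 3 : Subgroup G)) :
    (∀ i j k : Fin 4, i ≠ j → i ≠ k → j ≠ k →
      Nat.card (H i) * Nat.card (H j) * Nat.card (H k) ≠
        Nat.card G ^ 2 * Nat.card (H i ⊓ H j ⊓ H k : Subgroup G)) ∧
    Nat.card (H 0) * Nat.card (H 1) * Nat.card (H 2) * Nat.card (H 3) ≠
      Nat.card G ^ 3 * Nat.card (H 0 ⊓ H 1 ⊓ H 2 ⊓ H 3 : Subgroup G) := by
  have hI : ¬ Subgroup.SatisfiesIngleton (H 0) (H 1) (H 2) (H 3) := not_le.mpr hviol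
  have h012 : ¬ (H 0).IndepTriple (H 1) (H 2) := fun h => hI (.of_indepPair _ h.indepPair)
  have h013 : ¬ (H 0).IndepTriple (H 1) (H 3) := fun h => hI (.of_indepPair _ h.indepPair)
  have h023 : ¬ (H 0).IndepTriple (H 2) (H 3) := fun h =>
    hI (Subgroup.SatisfiesIngleton.of_indepPair_inf _ h.indepPair_inf).swap_left
  have h123 : ¬ (H 1).IndepTriple (H 2) (H 3) := fun h =>
    hI (.of_indepPair_inf _ h.indepPair_inf)
  refine ⟨forall_ne_of_forall_lt_of_swap (P := fun i j k => ¬ (H i).IndepTriple (H j) (H k))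
    (fun _ _ _ h h' => h (Subgroup.indepTriple_comm.1 h'))
    (fun _ _ _ h h' => h (Subgroup.indepTriple_right_comm.1 h')) ?_,
    fun h => h012 (.of_card_mul_card_mul_card_mul_card_eq h)⟩
  intro i j k hij hjk
  fin_cases i <;> fin_cases j <;> fin_cases k
  all_goals first | exact h012 | exact h013 | exact h023 | exact h123 | simp at hij hjk
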